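/- Under assumptions (A1)–(A3) of the noise-based setup, the rate function I(η) = inf{ R(γ‖γ₀) : γ ∈ D, μ*(γ) = η } satisfies I(η) = R(η‖Ψ_{γ₀}(η)) for every η ∈ P(X), where Ψ_{γ₀}(η) = γ₀ ∘ ψ(η,·)⁻¹. -/

import Mathlib

open MeasureTheory ProbabilityTheory Real Filter Topology
open scoped Classical ENNReal NNReal

/-- Relative entropy `R(ν ‖ μ)`: `∫ log (dν/dμ) dν` if `ν ≪ μ` (and the log-likelihood ratio
is `ν`-integrable), and `∞` otherwise. -/
noncomputable def relEnt {S : Type*} [MeasurableSpace S] (ν μ : Measure S) : EReal :=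
  if ν ≪ μ ∧ Integrable (llr ν μ) ν then ((∫ x, llr ν μ x ∂ν : ℝ) : EReal) else ⊤


/-- The empirical (probability) measure of `N+1` points. -/
noncomputable def empir {Z : Type*} [MeasurableSpace Z] {N : ℕ} (y : Fin (N + 1) → Z) :
    ProbabilityMeasure Z :=
  ⟨(((N : ℝ≥0∞) + 1))⁻¹ • ∑ i : Fin (N + 1), Measure.dirac (y i), by
    constructor
    simp only [Measure.smul_apply, Measure.coe_finset_sum, Finset.sum_apply,
      measure_univ, Finset.sum_const, Finset.card_univ, Fintype.card_fin, nsmul_eq_mul,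
      mul_one, smul_eq_mul]
    push_cast
    rw [ENNReal.inv_mul_cancel] <;> simp⟩

/-!
By uniqueness of the fixed point, `μstar γ = η` exactly when `γ ∘ ψ(η,·)⁻¹ = η`, so `I(η)` is the
least relative entropy `R(γ ‖ γ₀)` over the `γ` that `ψ(η,·)` pushes forward to `η`. The data
processing inequality bounds every such `R(γ ‖ γ₀)` below by `R(η ‖ γ₀ ∘ ψ(η,·)⁻¹)`, and the tilt
`dγ = (dη / d(γ₀ ∘ ψ(η,·)⁻¹)) ∘ ψ(η,·) dγ₀` attains the bound; (A3) puts that tilt into `D`.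
-/

open InformationTheory

section RelEnt

variable {α β : Type*} [MeasurableSpace α] [MeasurableSpace β]

lemma absolutelyContinuous_of_relEnt_ne_top {ν μ : Measure α} (h : relEnt ν μ ≠ ⊤) : ν ≪ μ := by
  by_contra hac
  exact h (if_neg fun h' => hac h'.1)

lemma relEnt_eq_klDiv {ν μ : Measure α} [IsFiniteMeasure ν] [IsFiniteMeasure μ]
    (h : ν Set.univ = μ Set.univ) : relEnt ν μ = (klDiv ν μ : EReal) := by
  by_cases hν : ν ≪ μ ∧ Integrable (llr ν μ) ν
  · have h_real : ν.real Set.univ = μ.real Set.univ := by simp [measureReal_def, h]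
    have h_nonneg := integral_llr_add_sub_measure_univ_nonneg hν.1 hν.2
    rw [h_real, add_sub_cancel_right] at h_nonneg
    rw [relEnt, if_pos hν, klDiv_of_ac_of_integrable hν.1 hν.2, h_real, add_sub_cancel_right,
      EReal.coe_ennreal_ofReal, max_eq_left h_nonneg]
  · rw [relEnt, if_neg hν, klDiv_eq_top_iff.mpr fun hac hint => hν ⟨hac, hint⟩]
    rfl

lemma relEnt_map_le {γ γ₀ : Measure α} [IsFiniteMeasure γ] [IsFiniteMeasure γ₀]
    (h : γ Set.univ = γ₀ Set.univ) {f : α → β} (hf : Measurable f) :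
    relEnt (γ.map f) (γ₀.map f) ≤ relEnt γ γ₀ := by
  rw [relEnt_eq_klDiv h, relEnt_eq_klDiv (by simp [Measure.map_apply hf .univ, h])]
  exact_mod_cast klDiv_map_le γ γ₀ hf

end RelEnt

section Tilt

variable {α β : Type*} [MeasurableSpace α] [MeasurableSpace β] {γ₀ : Measure α} {f : α → β}
  {η : Measure β}

lemma map_withDensity_rnDeriv_comp [IsFiniteMeasure γ₀] [IsFiniteMeasure η] (hf : Measurable f)
    (hac : η ≪ γ₀.map f) : (γ₀.withDensity fun y => η.rnDeriv (γ₀.map f) (f y)).map f = η := by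
  refine Measure.ext fun A hA => ?_
  rw [Measure.map_apply hf hA, withDensity_apply _ (hf hA),
    ← setLIntegral_map hA (Measure.measurable_rnDeriv _ _) hf, Measure.setLIntegral_rnDeriv hac]

lemma relEnt_withDensity_rnDeriv_comp [IsFiniteMeasure γ₀] [IsFiniteMeasure η] (hf : Measurable f)
    (hac : η ≪ γ₀.map f) :
    relEnt (γ₀.withDensity fun y => η.rnDeriv (γ₀.map f) (f y)) γ₀ = relEnt η (γ₀.map f) := by
  set γ := γ₀.withDensity fun y => η.rnDeriv (γ₀.map f) (f y)
  have hγ : γ ≪ γ₀ := withDensity_absolutelyContinuous _ _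
  have hmap : γ.map f = η := map_withDensity_rnDeriv_comp hf hac
  have hllr : llr γ γ₀ =ᵐ[γ] fun y => llr η (γ₀.map f) (f y) := by
    refine hγ.ae_le ?_
    filter_upwards [Measure.rnDeriv_withDensity (f := fun y => η.rnDeriv (γ₀.map f) (f y)) γ₀
      ((Measure.measurable_rnDeriv _ _).comp hf)] with y hy
    rw [llr, llr, hy]
  have hmeas : AEStronglyMeasurable (llr η (γ₀.map f)) (γ.map f) :=
    (stronglyMeasurable_llr _ _).aestronglyMeasurable
  have hint : Integrable (llr γ γ₀) γ ↔ Integrable (llr η (γ₀.map f)) η := by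
    rw [integrable_congr hllr]
    exact (integrable_map_measure hmeas hf.aemeasurable).symm.trans (by rw [hmap])
  have hintegral : ∫ y, llr γ γ₀ y ∂γ = ∫ x, llr η (γ₀.map f) x ∂η := by
    rw [integral_congr_ae hllr, ← integral_map hf.aemeasurable hmeas, hmap]
  simp only [relEnt, hγ, hac, true_and, hint, hintegral]

end Tilt

theorem stmt10_general {X Y : Type*}
    [MeasurableSpace X] [TopologicalSpace X] [BorelSpace X]
    [MeasurableSpace Y] [TopologicalSpace Y] [BorelSpace Y]
    [MeasurableSpace (ProbabilityMeasure X)]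
    (γ₀ : ProbabilityMeasure Y)
    (ψ : ProbabilityMeasure X → Y → X) (hψ : Measurable (Function.uncurry ψ))
    (D : Set (ProbabilityMeasure Y))
    (μstar : ProbabilityMeasure Y → ProbabilityMeasure X)
    (hA1 : ∀ γ ∈ D,
      Measure.map (ψ (μstar γ)) (γ : Measure Y) = (μstar γ : Measure X) ∧
      ∀ μ : ProbabilityMeasure X,
        Measure.map (ψ μ) (γ : Measure Y) = (μ : Measure X) → μ = μstar γ)
    (hA3 : ∀ γ : ProbabilityMeasure Y, relEnt (γ : Measure Y) (γ₀ : Measure Y) < ⊤ →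
      γ ∈ D ∧ ContinuousWithinAt μstar D γ) :
    ∀ η : ProbabilityMeasure X,
      (⨅ γ : {γ : ProbabilityMeasure Y // γ ∈ D ∧ μstar γ = η},
        relEnt (γ.1 : Measure Y) (γ₀ : Measure Y)) =
      relEnt (η : Measure X) (Measure.map (ψ η) (γ₀ : Measure Y)) := by
  intro η
  have hf : Measurable (ψ η) := hψ.comp (measurable_const.prodMk measurable_id)
  refine le_antisymm ?_ (le_iInf ?_)
  · rcases eq_or_ne (relEnt (η : Measure X) ((γ₀ : Measure Y).map (ψ η))) ⊤ with htop | htop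
    · exact htop ▸ le_top
    have hac := absolutelyContinuous_of_relEnt_ne_top htop
    have hmap := map_withDensity_rnDeriv_comp hf hac
    have hrel := relEnt_withDensity_rnDeriv_comp hf hac
    let γ : ProbabilityMeasure Y :=
      ⟨_, (Measure.isProbabilityMeasure_map_iff hf.aemeasurable).mp (by rw [hmap]; infer_instance)⟩
    have hγD : γ ∈ D := (hA3 γ (hrel ▸ htop.lt_top)).1
    exact iInf_le_of_le ⟨γ, hγD, ((hA1 γ hγD).2 η hmap).symm⟩ hrel.le
  · rintro ⟨γ, hγD, rfl⟩
    exact (hA1 γ hγD).1 ▸ relEnt_map_le (by simp) hf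

/-- Under (A1)–(A3) of the noise-based setup, the rate function
`I(η) = inf { R(γ ‖ γ₀) : γ ∈ D, μ*(γ) = η }` has the relative entropy form
`I(η) = R(η ‖ Ψ_{γ₀}(η))`, where `Ψ_{γ₀}(η) = γ₀ ∘ ψ(η,·)⁻¹`. -/
theorem stmt10 {X Y : Type*}
    [MeasurableSpace X] [TopologicalSpace X] [PolishSpace X] [BorelSpace X]
    [MeasurableSpace Y] [TopologicalSpace Y] [PolishSpace Y] [BorelSpace Y]
    [MeasurableSpace (ProbabilityMeasure X)] [BorelSpace (ProbabilityMeasure X)]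
    [MeasurableSpace (ProbabilityMeasure Y)] [BorelSpace (ProbabilityMeasure Y)]
    (γ₀ : ProbabilityMeasure Y)
    (ψ : ProbabilityMeasure X → Y → X) (hψ : Measurable (Function.uncurry ψ))
    (D : Set (ProbabilityMeasure Y)) (hD : MeasurableSet D)
    (μstar : ProbabilityMeasure Y → ProbabilityMeasure X)
    (hA1 : ∀ γ ∈ D,
      Measure.map (ψ (μstar γ)) (γ : Measure Y) = (μstar γ : Measure X) ∧
      ∀ μ : ProbabilityMeasure X,
        Measure.map (ψ μ) (γ : Measure Y) = (μ : Measure X) → μ = μstar γ)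
    (hA1meas : Measurable fun γ : D => μstar (γ : ProbabilityMeasure Y))
    (hA2 : ∀ N : ℕ,
      Measure.pi (fun _ : Fin (N + 1) => (γ₀ : Measure Y))
        {y : Fin (N + 1) → Y | empir y ∈ D} = 1)
    (hA3 : ∀ γ : ProbabilityMeasure Y, relEnt (γ : Measure Y) (γ₀ : Measure Y) < ⊤ →
      γ ∈ D ∧ ContinuousWithinAt μstar D γ) :
    ∀ η : ProbabilityMeasure X,
      (⨅ γ : {γ : ProbabilityMeasure Y // γ ∈ D ∧ μstar γ = η},
        relEnt (γ.1 : Measure Y) (γ₀ : Measure Y)) =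
      relEnt (η : Measure X) (Measure.map (ψ η) (γ₀ : Measure Y)) :=
  stmt10_general γ₀ ψ hψ D μstar hA1 hA3
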